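/- Let M, N be traceless Hermitian d×d complex matrices and let V₁,…,V_k ∈ ℂ^{d×m} have entries drawn i.i.d. from the complex Gaussian N(0, 1/d). Then E[⟨M_{V₁,…,V_k}, N_{V₁,…,V_k}⟩] = (k(k−1)m/d²)·⟨M,N⟩. -/

import Mathlib

open Matrix MeasureTheory ProbabilityTheory BigOperators

/-- Hilbert–Schmidt inner product ⟨A,B⟩ = tr(A†B). -/
noncomputable def hsInner {n m' : Type*} [Fintype n] [Fintype m'] (A B : Matrix n m' ℂ) : ℂ :=
  (Aᴴ * B).trace

/-- Frobenius norm of a matrix. -/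
noncomputable def frobNorm {n m : Type*} [Fintype n] [Fintype m] (A : Matrix n m ℂ) : ℝ :=
  Real.sqrt (∑ i, ∑ j, ‖A i j‖ ^ 2)

/-- `M_{V₁,…,V_k}` : the k×k matrix with (i,j) entry `tr(Vᵢᴴ M V_j)` off the diagonal
and `0` on the diagonal. -/
noncomputable def proj {d m k : ℕ} (V : Fin k → Matrix (Fin d) (Fin m) ℂ)
    (M : Matrix (Fin d) (Fin d) ℂ) : Matrix (Fin k) (Fin k) ℂ := fun i j =>
  if i = j then 0 else ((V i)ᴴ * M * V j).trace

/-- The matrix of (real) Gaussian entries `g (i, a, c)` forming `Vᵢ`. -/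
noncomputable def gmat {d m k : ℕ} {Ω : Type*} (g : Fin k × Fin d × Fin m → Ω → ℝ)
    (i : Fin k) (ω : Ω) : Matrix (Fin d) (Fin m) ℂ := fun a c => (g (i, a, c) ω : ℂ)

/-! Expanding `tr(Vᵢᴴ K Vⱼ) = ∑_{a,b,c} K_{ab} (Vᵢ)_{ac} (Vⱼ)_{bc}`, the trace is a linear
combination of the products `(Vᵢ)_{ac} (Vⱼ)_{bc}`. For `i ≠ j` these products are uncorrelated,
each with second moment `1/d²`: the factors from the two independent blocks split the
expectation, and distinct centred entries are uncorrelated. So every off-diagonal entry gives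
`E[conj (M_V)ᵢⱼ · (N_V)ᵢⱼ] = d⁻² ∑_{a,b,c} conj M_{ab} N_{ab} = (m/d²) ⟨M,N⟩`, and there are
`k(k-1)` off-diagonal entries. -/

open scoped NNReal ComplexConjugate

namespace ProbabilityTheory

section GaussianMoments

variable {Ω : Type*} [MeasurableSpace Ω] {P : Measure Ω} {X : Ω → ℝ} {v : ℝ≥0}

lemma HasLaw.memLp_of_gaussianReal (hX : HasLaw X (gaussianReal 0 v) P) {p : ENNReal}
    (hp : p ≠ ⊤) : MemLp X p P :=
  (memLp_map_measure_iff aestronglyMeasurable_id hX.aemeasurable).1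
    (hX.map_eq ▸ memLp_id_gaussianReal' p hp)

lemma HasLaw.integral_eq_zero_of_gaussianReal (hX : HasLaw X (gaussianReal 0 v) P) :
    P[X] = 0 := by
  rw [hX.integral_eq, integral_id_gaussianReal]

lemma HasLaw.integral_sq_of_gaussianReal [IsProbabilityMeasure P]
    (hX : HasLaw X (gaussianReal 0 v) P) : ∫ ω, X ω ^ 2 ∂P = v := by
  rw [← variance_of_integral_eq_zero hX.aemeasurable hX.integral_eq_zero_of_gaussianReal,
    hX.variance_eq, variance_id_gaussianReal]

end GaussianMoments

section Independence

variable {Ω : Type*} [MeasurableSpace Ω] {P : Measure Ω}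

lemma iIndepFun.integral_mul_eq_ite [IsProbabilityMeasure P] {ι : Type*} [DecidableEq ι]
    {g : ι → Ω → ℝ} {s : ℝ} (hindep : iIndepFun g P) (hint : ∀ p, Integrable (g p) P)
    (hmean : ∀ p, P[g p] = 0) (hvar : ∀ p, ∫ ω, g p ω ^ 2 ∂P = s) (p q : ι) :
    ∫ ω, g p ω * g q ω ∂P = if p = q then s else 0 := by
  split_ifs with hpq
  · subst hpq
    simp_rw [← sq]
    exact hvar p
  · rw [(hindep.indepFun hpq).integral_fun_mul_eq_mul_integral (hint p).1 (hint q).1, hmean,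
      zero_mul]

lemma iIndepFun.indepFun_mul_mul_of_fst_ne {ι κ : Type*} {g : ι × κ → Ω → ℝ}
    (hindep : iIndepFun g P) (hmeas : ∀ p, Measurable (g p)) {i j : ι} (hij : i ≠ j)
    (a b c e : κ) : IndepFun (g (i, a) * g (i, b)) (g (j, c) * g (j, e)) P :=
  hindep.indepFun_mul_mul hmeas _ _ _ _ (by simp [hij]) (by simp [hij]) (by simp [hij])
    (by simp [hij])

end Independence

end ProbabilityTheory

lemma conj_sum_mul_sum_ofReal {τ : Type*} [Fintype τ] (α β : τ → ℂ) (z : τ → ℝ) :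
    conj (∑ t, α t * z t) * ∑ t, β t * z t
      = ∑ t, ∑ t', conj (α t) * β t' * ((z t * z t' : ℝ) : ℂ) := by
  simp only [map_sum, map_mul, Complex.conj_ofReal, Finset.sum_mul_sum, Complex.ofReal_mul]
  exact Finset.sum_congr rfl fun t _ => Finset.sum_congr rfl fun t' _ => by ring

section Uncorrelated

variable {Ω τ : Type*} [MeasurableSpace Ω] {P : Measure Ω} [Fintype τ] {Z : τ → Ω → ℝ}

lemma integrable_conj_sum_mul_sum (hint : ∀ t t', Integrable (fun ω => Z t ω * Z t' ω) P)
    (α β : τ → ℂ) :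
    Integrable (fun ω => conj (∑ t, α t * Z t ω) * ∑ t, β t * Z t ω) P := by
  simp_rw [conj_sum_mul_sum_ofReal]
  exact integrable_finsetSum _ fun t _ => integrable_finsetSum _ fun t' _ =>
    (hint t t').ofReal.const_mul _

lemma integral_conj_sum_mul_sum [DecidableEq τ] {s : ℝ}
    (hint : ∀ t t', Integrable (fun ω => Z t ω * Z t' ω) P)
    (hcov : ∀ t t', ∫ ω, Z t ω * Z t' ω ∂P = if t = t' then s else 0) (α β : τ → ℂ) :
    ∫ ω, conj (∑ t, α t * Z t ω) * ∑ t, β t * Z t ω ∂P = s * ∑ t, conj (α t) * β t := by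
  have hint' (c : ℂ) (t t' : τ) : Integrable (fun ω => c * ((Z t ω * Z t' ω : ℝ) : ℂ)) P :=
    (hint t t').ofReal.const_mul c
  simp_rw [conj_sum_mul_sum_ofReal]
  rw [integral_finsetSum _ fun t _ => integrable_finsetSum _ fun t' _ => hint' _ t t']
  simp_rw [integral_finsetSum _ fun t' _ => hint' _ _ t', integral_const_mul,
    integral_complex_ofReal, hcov, apply_ite Complex.ofReal, Complex.ofReal_zero, mul_ite,
    mul_zero, Finset.sum_ite_eq, Finset.mem_univ, if_true, Finset.mul_sum]
  exact Finset.sum_congr rfl fun t _ => mul_comm _ _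

end Uncorrelated

lemma sum_sum_ite_eq_zero_else {ι R : Type*} [Fintype ι] [DecidableEq ι] [Ring R] (c : R) :
    ∑ i : ι, ∑ j : ι, (if i = j then 0 else c) = Fintype.card ι * (Fintype.card ι - 1) * c := by
  have (i j : ι) : (if i = j then 0 else c) = c - if i = j then c else 0 := by
    split_ifs <;> simp
  simp [this, Finset.sum_sub_distrib, mul_sub, sub_mul, mul_assoc]

lemma hsInner_eq_sum {n n' : Type*} [Fintype n] [Fintype n'] (A B : Matrix n n' ℂ) :
    hsInner A B = ∑ a, ∑ b, conj (A a b) * B a b := by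
  simp only [hsInner, Matrix.trace, Matrix.diag_apply, Matrix.mul_apply,
    Matrix.conjTranspose_apply, RCLike.star_def]
  exact Finset.sum_comm

lemma sum_conj_mul_eq_hsInner {d : ℕ} (m : ℕ) (M N : Matrix (Fin d) (Fin d) ℂ) :
    ∑ t : Fin d × Fin d × Fin m, conj (M t.1 t.2.1) * N t.1 t.2.1 = m * hsInner M N := by
  simp [hsInner_eq_sum, Fintype.sum_prod_type, Finset.mul_sum]

def crossEntry {Ω : Type*} {d m k : ℕ} (g : Fin k × Fin d × Fin m → Ω → ℝ) (i j : Fin k)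
    (t : Fin d × Fin d × Fin m) (ω : Ω) : ℝ :=
  g (i, t.1, t.2.2) ω * g (j, t.2.1, t.2.2) ω

lemma trace_conjTranspose_gmat_mul_mul {Ω : Type*} {d m k : ℕ}
    (g : Fin k × Fin d × Fin m → Ω → ℝ) (K : Matrix (Fin d) (Fin d) ℂ) (i j : Fin k) (ω : Ω) :
    ((gmat g i ω)ᴴ * K * gmat g j ω).trace = ∑ t, K t.1 t.2.1 * crossEntry g i j t ω := by
  simp only [Matrix.trace, Matrix.diag_apply, Matrix.mul_apply, Matrix.conjTranspose_apply, gmat,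
    crossEntry, RCLike.star_def, Complex.conj_ofReal, Finset.sum_mul, Fintype.sum_prod_type,
    Complex.ofReal_mul]
  conv_rhs => rw [Finset.sum_comm_cycle]
  refine Finset.sum_congr rfl fun c _ => ?_
  rw [Finset.sum_comm]
  exact Finset.sum_congr rfl fun a _ => Finset.sum_congr rfl fun b _ => by ring

lemma crossEntry_mul_crossEntry {Ω : Type*} {d m k : ℕ} (g : Fin k × Fin d × Fin m → Ω → ℝ)
    (i j : Fin k) (t t' : Fin d × Fin d × Fin m) :
    (fun ω => crossEntry g i j t ω * crossEntry g i j t' ω)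
      = (g (i, t.1, t.2.2) * g (i, t'.1, t'.2.2))
        * (g (j, t.2.1, t.2.2) * g (j, t'.2.1, t'.2.2)) := by
  ext ω
  simp only [crossEntry, Pi.mul_apply]
  ring

section GaussianMatrices

variable {Ω : Type*} [MeasurableSpace Ω] {μ : Measure Ω} {d m k : ℕ}
  {g : Fin k × Fin d × Fin m → Ω → ℝ}
  (hindep : iIndepFun g μ) (hmeas : ∀ p, Measurable (g p)) (hL2 : ∀ p, MemLp (g p) 2 μ)
include hindep hmeas hL2

lemma integrable_crossEntry_mul {i j : Fin k} (hij : i ≠ j) (t t' : Fin d × Fin d × Fin m) :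
    Integrable (fun ω => crossEntry g i j t ω * crossEntry g i j t' ω) μ := by
  rw [crossEntry_mul_crossEntry]
  exact (hindep.indepFun_mul_mul_of_fst_ne hmeas hij _ _ _ _).integrable_mul
    ((hL2 _).integrable_mul (hL2 _)) ((hL2 _).integrable_mul (hL2 _))

lemma integral_crossEntry_mul {s : ℝ}
    (hcov : ∀ p q, ∫ ω, g p ω * g q ω ∂μ = if p = q then s else 0)
    {i j : Fin k} (hij : i ≠ j) (t t' : Fin d × Fin d × Fin m) :
    ∫ ω, crossEntry g i j t ω * crossEntry g i j t' ω ∂μ = if t = t' then s ^ 2 else 0 := by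
  rw [crossEntry_mul_crossEntry, (hindep.indepFun_mul_mul_of_fst_ne hmeas hij _ _ _ _)
    |>.integral_mul_eq_mul_integral ((hL2 _).integrable_mul (hL2 _)).1
      ((hL2 _).integrable_mul (hL2 _)).1]
  simp only [Pi.mul_apply, hcov, ite_zero_mul_ite_zero, ← sq]
  refine if_congr ?_ rfl rfl
  simp only [Prod.ext_iff]
  tauto

lemma integrable_conj_proj_mul_proj (M N : Matrix (Fin d) (Fin d) ℂ) (i j : Fin k) :
    Integrable (fun ω => conj (proj (fun i => gmat g i ω) M i j)
      * proj (fun i => gmat g i ω) N i j) μ := by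
  by_cases hij : i = j
  · simp [proj, hij]
  · simp only [proj, if_neg hij, trace_conjTranspose_gmat_mul_mul]
    exact integrable_conj_sum_mul_sum (integrable_crossEntry_mul hindep hmeas hL2 hij) _ _

lemma integral_conj_proj_mul_proj {s : ℝ}
    (hcov : ∀ p q, ∫ ω, g p ω * g q ω ∂μ = if p = q then s else 0)
    (M N : Matrix (Fin d) (Fin d) ℂ) (i j : Fin k) :
    ∫ ω, conj (proj (fun i => gmat g i ω) M i j) * proj (fun i => gmat g i ω) N i j ∂μ
      = if i = j then 0 else m * s ^ 2 * hsInner M N := by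
  split_ifs with hij
  · simp [proj, hij]
  · simp only [proj, if_neg hij, trace_conjTranspose_gmat_mul_mul]
    rw [integral_conj_sum_mul_sum (integrable_crossEntry_mul hindep hmeas hL2 hij)
      (integral_crossEntry_mul hindep hmeas hL2 hcov hij), sum_conj_mul_eq_hsInner]
    push_cast
    ring

lemma integral_hsInner_proj_gmat {s : ℝ}
    (hcov : ∀ p q, ∫ ω, g p ω * g q ω ∂μ = if p = q then s else 0)
    (M N : Matrix (Fin d) (Fin d) ℂ) :
    ∫ ω, hsInner (proj (fun i => gmat g i ω) M) (proj (fun i => gmat g i ω) N) ∂μ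
      = k * (k - 1) * m * s ^ 2 * hsInner M N := by
  conv_lhs => enter [2, ω]; rw [hsInner_eq_sum]
  rw [integral_finsetSum _ fun i _ => integrable_finsetSum _ fun j _ =>
    integrable_conj_proj_mul_proj hindep hmeas hL2 M N i j]
  simp_rw [integral_finsetSum _ fun j _ => integrable_conj_proj_mul_proj hindep hmeas hL2 M N _ j,
    integral_conj_proj_mul_proj hindep hmeas hL2 hcov]
  rw [sum_sum_ite_eq_zero_else, Fintype.card_fin]
  ring

end GaussianMatrices

theorem expectation_proj_inner_general {d m k : ℕ} {Ω : Type*} [MeasurableSpace Ω]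
    (μ : Measure Ω) [IsProbabilityMeasure μ]
    (g : Fin k × Fin d × Fin m → Ω → ℝ)
    (hmeas : ∀ p, Measurable (g p))
    (hindep : iIndepFun g μ)
    (hgauss : ∀ p, Measure.map (g p) μ = gaussianReal 0 ((d : NNReal)⁻¹))
    (M N : Matrix (Fin d) (Fin d) ℂ) :
    ∫ ω, hsInner (proj (fun i => gmat g i ω) M) (proj (fun i => gmat g i ω) N) ∂μ =
      ((k : ℂ) * ((k : ℂ) - 1) * m / (d : ℂ) ^ 2) * hsInner M N := by
  have hlaw (p) : HasLaw (g p) (gaussianReal 0 (d : ℝ≥0)⁻¹) μ :=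
    ⟨(hmeas p).aemeasurable, hgauss p⟩
  have hL2 (p) : MemLp (g p) 2 μ := (hlaw p).memLp_of_gaussianReal ENNReal.ofNat_ne_top
  have hcov := hindep.integral_mul_eq_ite (fun p => (hL2 p).integrable one_le_two)
    (fun p => (hlaw p).integral_eq_zero_of_gaussianReal)
    (fun p => (hlaw p).integral_sq_of_gaussianReal)
  rw [integral_hsInner_proj_gmat hindep hmeas hL2 hcov]
  push_cast
  ring

/-- For traceless Hermitian `M, N` and `V₁,…,V_k ∈ ℂ^{d×m}` with i.i.d.
`N(0,1/d)` entries, `E[⟨M_{V}, N_{V}⟩] = (k(k−1)m/d²)·⟨M,N⟩`. -/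
theorem expectation_proj_inner {d m k : ℕ} {Ω : Type*} [MeasurableSpace Ω]
    (μ : Measure Ω) [IsProbabilityMeasure μ]
    (g : Fin k × Fin d × Fin m → Ω → ℝ)
    (hmeas : ∀ p, Measurable (g p))
    (hindep : iIndepFun g μ)
    (hgauss : ∀ p, Measure.map (g p) μ = gaussianReal 0 ((d : NNReal)⁻¹))
    (M N : Matrix (Fin d) (Fin d) ℂ)
    (hM : M.IsHermitian) (hN : N.IsHermitian)
    (hMtr : M.trace = 0) (hNtr : N.trace = 0) :
    ∫ ω, hsInner (proj (fun i => gmat g i ω) M) (proj (fun i => gmat g i ω) N) ∂μ =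
      ((k : ℂ) * ((k : ℂ) - 1) * m / (d : ℂ) ^ 2) * hsInner M N :=
  expectation_proj_inner_general μ g hmeas hindep hgauss M N
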